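/- Let γ = (γ₁,γ₂,γ₃) ∈ ℂ⟦t⟧³ with γᵢ(0) = 0 for all i and γ ≠ 0, and assume γ is primitive (gcd(Γ(γ)) = 1) and m(γ) ≥ 2. Assume ord(γ₁) = m(γ) is minimal among the orders of the nonzero γᵢ, so that γ₂/γ₁ and γ₃/γ₁ belong to ℂ⟦t⟧; let c₂, c₃ be their constant coefficients and let γ̃ = (γ₁, γ₂/γ₁ − c₂, γ₃/γ₁ − c₃) be the strict transform of γ under the blow-up of the origin of ℂ³. Then either m(γ̃) < m(γ), or m(γ̃) = m(γ) and n(γ̃) < n(γ). -/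

import Mathlib

open MvPowerSeries in
/-- Substitution (composition) of formal power series:  `substPS v f` is the formal
power series `f (v 0, v 1, …)` obtained by substituting the family `v` of power series
into `f`.  When every `v i` has zero constant coefficient (the only case in which this
notion is used), the coefficient of a monomial `e` in `f (v 0, v 1, …)` is the finite
sum, over the multi-degrees `d` of total degree at most the total degree of `e`
(coordinatewise bounded by it), of `(coeff d f) * coeff e (∏ i, (v i) ^ d i)`;
this is the usual composition of formal power series. -/
noncomputable def substPS {σ τ : Type*} [Fintype σ] [DecidableEq σ] {R : Type*}
    [CommSemiring R] (v : σ → MvPowerSeries τ R) (f : MvPowerSeries σ R) :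
    MvPowerSeries τ R :=
  fun e => ∑ d ∈ Finset.Iic (Finsupp.equivFunOnFinite.symm
      fun _ : σ => e.sum fun _ n => n),
    MvPowerSeries.coeff d f * MvPowerSeries.coeff e (∏ i, (v i) ^ (d i))

/-- `Γ(γ)`, the semigroup of a parametrized space curve `γ = (γ₁,γ₂,γ₃) ∈ ℂ⟦t⟧³`
(with each `γᵢ(0) = 0`):  the set of orders `ord (f(γ₁,γ₂,γ₃))` for
`f ∈ ℂ⟦x,y,z⟧` with `f(γ₁,γ₂,γ₃) ≠ 0`. -/
def curveSemigroup (γ : Fin 3 → PowerSeries ℂ) : Set ℕ :=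
  {j : ℕ | ∃ f : MvPowerSeries (Fin 3) ℂ,
    substPS γ f ≠ 0 ∧ PowerSeries.order (substPS γ f) = (j : ℕ∞)}

/-- The parametrization `γ` is primitive:  `gcd (Γ(γ)) = 1`, i.e. the only natural
number dividing every element of `Γ(γ)` is `1`. -/
def curvePrimitive (γ : Fin 3 → PowerSeries ℂ) : Prop :=
  ∀ d : ℕ, (∀ j ∈ curveSemigroup γ, d ∣ j) → d = 1

/-- The multiplicity `m(γ) = min (Γ(γ) ∖ {0})`. -/
noncomputable def curveMult (γ : Fin 3 → PowerSeries ℂ) : ℕ :=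
  sInf {j ∈ curveSemigroup γ | j ≠ 0}

/-- `n(γ)`, the minimum of `Γ(γ)` with all multiples of `m(γ)` removed. -/
noncomputable def curveN (γ : Fin 3 → PowerSeries ℂ) : ℕ :=
  sInf {j ∈ curveSemigroup γ | ¬ curveMult γ ∣ j}

/-! The multiplicity cannot grow, since `γ₁` is still a coordinate of `γ̃`. If it stays
`m(γ) = ord γ₁`, take `f` with `ord f(γ) = n(γ)`; then `f(0) = 0`, so substituting the
blow-up chart `(x, x (y + c₂), x (z + c₃))` into `f` gives a series divisible by `x`, say
`x · g`. Since the chart evaluated at `γ̃` is `γ`, we get `γ₁ · g(γ̃) = f(γ)`, so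
`n(γ) - m(γ) = ord g(γ̃)` lies in `Γ(γ̃)` and is not a multiple of `m(γ̃) = m(γ)`. -/

namespace MvPowerSeries

variable {σ τ R : Type*} [CommRing R] {a : σ → MvPowerSeries τ R}

theorem coeff_prod_pow_eq_zero_of_degree_lt (ha : ∀ s, constantCoeff (a s) = 0)
    {d : σ →₀ ℕ} {e : τ →₀ ℕ} {i : σ} (h : e.degree < d i) :
    coeff e (d.prod fun s n ↦ a s ^ n) = 0 := by
  obtain ⟨g, hg⟩ : a i ^ d i ∣ d.prod fun s n ↦ a s ^ n :=
    Finset.dvd_prod_of_mem _ (Finsupp.mem_support_iff.2 (by omega))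
  apply coeff_of_lt_order
  calc (e.degree : ℕ∞) < d i := by exact_mod_cast h
    _ ≤ (a i ^ d i).order := le_order_pow_of_constantCoeff_eq_zero _ (ha i)
    _ ≤ (a i ^ d i).order + g.order := le_self_add
    _ ≤ _ := hg ▸ le_order_mul

theorem constantCoeff_subst_of_constantCoeff_eq_zero [Finite σ]
    (ha : ∀ s, constantCoeff (a s) = 0) (f : MvPowerSeries σ R) :
    constantCoeff (subst a f) = constantCoeff f := by
  have hsub := hasSubst_of_constantCoeff_zero ha
  calc constantCoeff (subst a f)
      = constantCoeff (subst a (C (constantCoeff f) + (f - C (constantCoeff f)))) := by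
        rw [add_sub_cancel]
    _ = constantCoeff f := by
        rw [subst_add hsub, subst_C, map_add, constantCoeff_subst_eq_zero hsub ha (by simp),
          constantCoeff_C, add_zero]

theorem X_dvd_subst (ha : HasSubst a) {t : τ} (hX : ∀ s, X t ∣ a s)
    {f : MvPowerSeries σ R} (hf : constantCoeff f = 0) : X t ∣ subst a f := by
  rw [X_dvd_iff]
  intro m hm
  rw [coeff_subst ha, finsum_eq_zero_of_forall_eq_zero]
  intro d
  rcases eq_or_ne d 0 with rfl | hd
  · simp [hf]
  obtain ⟨i, hi⟩ := Finsupp.ne_iff.1 hd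
  have hdvd : X t ∣ d.prod fun s n ↦ a s ^ n :=
    (dvd_pow (hX i) hi).trans (Finset.dvd_prod_of_mem _ (Finsupp.mem_support_iff.2 hi))
  rw [X_dvd_iff.1 hdvd m hm, smul_zero]

end MvPowerSeries

open MvPowerSeries in
theorem substPS_eq_subst {σ τ R : Type*} [Fintype σ] [DecidableEq σ] [CommRing R]
    {a : σ → MvPowerSeries τ R} (ha : ∀ s, constantCoeff (a s) = 0) (f : MvPowerSeries σ R) :
    substPS a f = subst a f := by
  ext e
  rw [coeff_subst (hasSubst_of_constantCoeff_zero ha), finsum_eq_sum_of_support_subset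
    (s := Finset.Iic (Finsupp.equivFunOnFinite.symm fun _ ↦ e.degree))]
  · simp only [smul_eq_mul, Finsupp.prod_pow]
    rfl
  · intro d hd
    by_contra hIic
    simp only [Finset.coe_Iic, Set.mem_Iic, Finsupp.le_def, not_forall, not_le] at hIic
    obtain ⟨i, hi⟩ := hIic
    have hi' : e.degree < d i := by simpa using hi
    exact hd (by simp only [coeff_prod_pow_eq_zero_of_degree_lt ha hi', smul_zero])

section Blowup

variable {R : Type*} [CommRing R] {γ₁ δ₂ δ₃ : PowerSeries R}

open MvPowerSeries in
noncomputable def blowupChart (c₂ c₃ : R) : Fin 3 → MvPowerSeries (Fin 3) R :=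
  ![X 0, X 0 * (X 1 + C c₂), X 0 * (X 2 + C c₃)]

open PowerSeries in
noncomputable def strictTransform (γ₁ δ₂ δ₃ : PowerSeries R) : Fin 3 → PowerSeries R :=
  ![γ₁, δ₂ - C (constantCoeff δ₂), δ₃ - C (constantCoeff δ₃)]

theorem hasSubst_blowupChart (c₂ c₃ : R) : MvPowerSeries.HasSubst (blowupChart c₂ c₃) :=
  MvPowerSeries.hasSubst_of_constantCoeff_zero fun i ↦ by fin_cases i <;> simp [blowupChart]

theorem constantCoeff_strictTransform (hc₁ : PowerSeries.constantCoeff γ₁ = 0) (i : Fin 3) :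
    PowerSeries.constantCoeff (strictTransform γ₁ δ₂ δ₃ i) = 0 := by
  fin_cases i <;> simp [strictTransform, hc₁]

theorem hasSubst_strictTransform (hc₁ : PowerSeries.constantCoeff γ₁ = 0) :
    MvPowerSeries.HasSubst (strictTransform γ₁ δ₂ δ₃) :=
  MvPowerSeries.hasSubst_of_constantCoeff_zero (constantCoeff_strictTransform hc₁)

theorem subst_strictTransform_blowupChart (hc₁ : PowerSeries.constantCoeff γ₁ = 0)
    (i : Fin 3) :
    MvPowerSeries.subst (strictTransform γ₁ δ₂ δ₃)
        (blowupChart (PowerSeries.constantCoeff δ₂) (PowerSeries.constantCoeff δ₃) i) =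
      ![γ₁, γ₁ * δ₂, γ₁ * δ₃] i := by
  have hsub := hasSubst_strictTransform (δ₂ := δ₂) (δ₃ := δ₃) hc₁
  fin_cases i <;>
    simp [blowupChart, MvPowerSeries.subst_mul hsub, MvPowerSeries.subst_add hsub,
      MvPowerSeries.subst_X hsub] <;>
    simp only [strictTransform, Matrix.cons_val] <;>
    exact congrArg (γ₁ * ·) (sub_add_cancel _ _)

open MvPowerSeries in
theorem exists_mul_subst_strictTransform_eq (hc₁ : PowerSeries.constantCoeff γ₁ = 0)
    {f : MvPowerSeries (Fin 3) R} (hf : constantCoeff f = 0) :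
    ∃ g : MvPowerSeries (Fin 3) R,
      γ₁ * subst (strictTransform γ₁ δ₂ δ₃) g = subst ![γ₁, γ₁ * δ₂, γ₁ * δ₃] f := by
  have hsub := hasSubst_strictTransform (δ₂ := δ₂) (δ₃ := δ₃) hc₁
  have hchart := hasSubst_blowupChart (PowerSeries.constantCoeff δ₂) (PowerSeries.constantCoeff δ₃)
  obtain ⟨g, hg⟩ := X_dvd_subst hchart (t := 0)
    (fun i ↦ by fin_cases i <;> simp [blowupChart]) hf
  refine ⟨g, ?_⟩
  calc γ₁ * subst (strictTransform γ₁ δ₂ δ₃) g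
      = subst (strictTransform γ₁ δ₂ δ₃) (X 0 * g) := by
        rw [subst_mul hsub, subst_X hsub]
        rfl
    _ = subst ![γ₁, γ₁ * δ₂, γ₁ * δ₃] f := by
        rw [← hg, subst_comp_subst_apply hchart hsub]
        exact congrArg (subst · f) (funext (subst_strictTransform_blowupChart hc₁))

end Blowup

section SpaceCurve

variable {γ : Fin 3 → PowerSeries ℂ}

theorem mem_curveSemigroup_iff (hγ : ∀ i, PowerSeries.constantCoeff (γ i) = 0) {j : ℕ} :
    j ∈ curveSemigroup γ ↔ ∃ f : MvPowerSeries (Fin 3) ℂ,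
      MvPowerSeries.subst γ f ≠ 0 ∧ PowerSeries.order (MvPowerSeries.subst γ f) = j := by
  simp only [curveSemigroup, Set.mem_ofPred_eq, substPS_eq_subst hγ]

theorem order_mem_curveSemigroup (hγ : ∀ i, PowerSeries.constantCoeff (γ i) = 0) {i : Fin 3}
    (hi : γ i ≠ 0) {j : ℕ} (hj : (γ i).order = j) : j ∈ curveSemigroup γ := by
  have hX := MvPowerSeries.subst_X (R := ℂ) (MvPowerSeries.hasSubst_of_constantCoeff_zero hγ) i
  exact (mem_curveSemigroup_iff hγ).2 ⟨MvPowerSeries.X i, hX ▸ hi, hX ▸ hj⟩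

theorem curveMult_le_of_mem {j : ℕ} (hj : j ∈ curveSemigroup γ) (hj0 : j ≠ 0) :
    curveMult γ ≤ j :=
  Nat.sInf_le ⟨hj, hj0⟩

theorem curveN_le_of_mem {j : ℕ} (hj : j ∈ curveSemigroup γ) (hdvd : ¬curveMult γ ∣ j) :
    curveN γ ≤ j :=
  Nat.sInf_le ⟨hj, hdvd⟩

theorem curveN_spec (hprim : curvePrimitive γ) (hm : curveMult γ ≠ 1) :
    curveN γ ∈ curveSemigroup γ ∧ ¬curveMult γ ∣ curveN γ := by
  refine Nat.sInf_mem (s := {j ∈ curveSemigroup γ | ¬curveMult γ ∣ j}) ?_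
  by_contra hempty
  exact hm (hprim _ fun j hj ↦ by_contra fun hdvd ↦ hempty ⟨j, hj, hdvd⟩)

theorem exists_add_mem_curveSemigroup_strictTransform {γ₁ δ₂ δ₃ : PowerSeries ℂ}
    (hc₁ : PowerSeries.constantCoeff γ₁ = 0) {j : ℕ}
    (hj : j ∈ curveSemigroup ![γ₁, γ₁ * δ₂, γ₁ * δ₃]) (hj0 : j ≠ 0) :
    ∃ k ∈ curveSemigroup (strictTransform γ₁ δ₂ δ₃), γ₁.order + k = j := by
  have hγ : ∀ i, PowerSeries.constantCoeff (![γ₁, γ₁ * δ₂, γ₁ * δ₃] i) = 0 := fun i ↦ by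
    fin_cases i <;> simp [hc₁]
  obtain ⟨f, hf, hfj⟩ := (mem_curveSemigroup_iff hγ).1 hj
  have hcf : MvPowerSeries.constantCoeff f = 0 := by
    rw [← MvPowerSeries.constantCoeff_subst_of_constantCoeff_eq_zero hγ]
    exact PowerSeries.order_ne_zero_iff_constCoeff_eq_zero.1 (by rw [hfj]; exact_mod_cast hj0)
  obtain ⟨g, hg⟩ := exists_mul_subst_strictTransform_eq (δ₂ := δ₂) (δ₃ := δ₃) hc₁ hcf
  set h : PowerSeries ℂ := MvPowerSeries.subst (strictTransform γ₁ δ₂ δ₃) g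
  have hh : h ≠ 0 := by
    rintro h0
    rw [h0, mul_zero] at hg
    exact hf hg.symm
  have horder : γ₁.order + h.order = j := by
    rw [← PowerSeries.order_mul, hg, hfj]
  have hfin : h.order.toNat = h.order := ENat.natCast_toNat (PowerSeries.order_eq_top.not.2 hh)
  exact ⟨h.order.toNat,
    (mem_curveSemigroup_iff (constantCoeff_strictTransform hc₁)).2 ⟨g, hh, hfin.symm⟩,
    hfin ▸ horder⟩

end SpaceCurve

open PowerSeries in
theorem strict_transform_point_blowup_decreases_general (γ₁ γ₂ γ₃ : PowerSeries ℂ)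
    (hc₁ : constantCoeff γ₁ = 0)
    (hprim : curvePrimitive ![γ₁, γ₂, γ₃])
    (hm : 2 ≤ curveMult ![γ₁, γ₂, γ₃])
    (h₁ : γ₁ ≠ 0)
    (hord : order γ₁ = (curveMult ![γ₁, γ₂, γ₃] : ℕ∞))
    (δ₂ δ₃ : PowerSeries ℂ) (hδ₂ : γ₂ = γ₁ * δ₂) (hδ₃ : γ₃ = γ₁ * δ₃) :
    curveMult ![γ₁, δ₂ - C (constantCoeff δ₂), δ₃ - C (constantCoeff δ₃)] <
        curveMult ![γ₁, γ₂, γ₃] ∨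
      (curveMult ![γ₁, δ₂ - C (constantCoeff δ₂), δ₃ - C (constantCoeff δ₃)] =
          curveMult ![γ₁, γ₂, γ₃] ∧
        curveN ![γ₁, δ₂ - C (constantCoeff δ₂), δ₃ - C (constantCoeff δ₃)] <
          curveN ![γ₁, γ₂, γ₃]) := by
  subst hδ₂ hδ₃
  change curveMult (strictTransform γ₁ δ₂ δ₃) < _ ∨
    (curveMult (strictTransform γ₁ δ₂ δ₃) = _ ∧ curveN (strictTransform γ₁ δ₂ δ₃) < _)
  set m := curveMult ![γ₁, γ₁ * δ₂, γ₁ * δ₃]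
  have hmult_le : curveMult (strictTransform γ₁ δ₂ δ₃) ≤ m :=
    curveMult_le_of_mem
      (order_mem_curveSemigroup (constantCoeff_strictTransform hc₁) (i := 0) h₁ hord) (by omega)
  refine hmult_le.lt_or_eq.imp id fun hmult ↦ ⟨hmult, ?_⟩
  obtain ⟨hn_mem, hn_dvd⟩ := curveN_spec hprim (by omega)
  obtain ⟨k, hk_mem, hk⟩ := exists_add_mem_curveSemigroup_strictTransform hc₁ hn_mem
    fun hn ↦ hn_dvd (by rw [hn]; exact dvd_zero m)
  have hmk : m + k = curveN ![γ₁, γ₁ * δ₂, γ₁ * δ₃] := by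
    rw [hord] at hk
    exact_mod_cast hk
  have hk_dvd : ¬curveMult (strictTransform γ₁ δ₂ δ₃) ∣ k := by
    rw [hmult]
    exact fun hdvd ↦ hn_dvd (hmk ▸ dvd_add dvd_rfl hdvd)
  have hn_le := curveN_le_of_mem hk_mem hk_dvd
  omega

open PowerSeries in
/-- Let `γ = (γ₁,γ₂,γ₃) ∈ ℂ⟦t⟧³` with `γᵢ(0) = 0` for all `i` and `γ ≠ 0`, and assume
`γ` is primitive and `m(γ) ≥ 2`.  Assume `ord(γ₁) = m(γ)` is minimal among the orders
of the nonzero `γᵢ`, so that `γ₂/γ₁` and `γ₃/γ₁` belong to `ℂ⟦t⟧` (say `γ₂ = γ₁·δ₂`,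
`γ₃ = γ₁·δ₃`); let `c₂, c₃` be their constant coefficients and let
`γ̃ = (γ₁, γ₂/γ₁ − c₂, γ₃/γ₁ − c₃)` be the strict transform of `γ` under the blow-up of
the origin of `ℂ³`.  Then either `m(γ̃) < m(γ)`, or `m(γ̃) = m(γ)` and `n(γ̃) < n(γ)`. -/
theorem strict_transform_point_blowup_decreases (γ₁ γ₂ γ₃ : PowerSeries ℂ)
    (hc₁ : constantCoeff γ₁ = 0) (hc₂ : constantCoeff γ₂ = 0)
    (hc₃ : constantCoeff γ₃ = 0)
    (hne : ¬(γ₁ = 0 ∧ γ₂ = 0 ∧ γ₃ = 0))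
    (hprim : curvePrimitive ![γ₁, γ₂, γ₃])
    (hm : 2 ≤ curveMult ![γ₁, γ₂, γ₃])
    (h₁ : γ₁ ≠ 0)
    (hord : order γ₁ = (curveMult ![γ₁, γ₂, γ₃] : ℕ∞))
    (hord₂ : order γ₁ ≤ order γ₂) (hord₃ : order γ₁ ≤ order γ₃)
    (δ₂ δ₃ : PowerSeries ℂ) (hδ₂ : γ₂ = γ₁ * δ₂) (hδ₃ : γ₃ = γ₁ * δ₃) :
    curveMult ![γ₁, δ₂ - C (constantCoeff δ₂), δ₃ - C (constantCoeff δ₃)] <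
        curveMult ![γ₁, γ₂, γ₃] ∨
      (curveMult ![γ₁, δ₂ - C (constantCoeff δ₂), δ₃ - C (constantCoeff δ₃)] =
          curveMult ![γ₁, γ₂, γ₃] ∧
        curveN ![γ₁, δ₂ - C (constantCoeff δ₂), δ₃ - C (constantCoeff δ₃)] <
          curveN ![γ₁, γ₂, γ₃]) :=
  strict_transform_point_blowup_decreases_general γ₁ γ₂ γ₃ hc₁ hprim hm h₁ hord δ₂ δ₃ hδ₂ hδ₃
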